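/- Let A ∈ 2^ω be non-computable and let X be 1-generic relative to A. Then X and A are Turing incomparable: X ≰_T A and A ≰_T X. -/

import Mathlib

open scoped ENNReal

namespace KLS

/-- `f : ℕ →. ℕ` is partial recursive relative to the total oracle `O : ℕ → ℕ`. -/
inductive RecursiveIn (O : ℕ → ℕ) : (ℕ →. ℕ) → Prop
  | zero : RecursiveIn O (pure 0)
  | succ : RecursiveIn O ↑Nat.succ
  | left : RecursiveIn O ↑fun n : ℕ => n.unpair.1
  | right : RecursiveIn O ↑fun n : ℕ => n.unpair.2
  | oracle : RecursiveIn O ↑O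
  | pair {f g} : RecursiveIn O f → RecursiveIn O g →
      RecursiveIn O fun n => Nat.pair <$> f n <*> g n
  | comp {f g} : RecursiveIn O f → RecursiveIn O g →
      RecursiveIn O fun n => g n >>= f
  | prec {f g} : RecursiveIn O f → RecursiveIn O g →
      RecursiveIn O (Nat.unpaired fun a n =>
        n.rec (f a) fun y IH => do let i ← IH; g (Nat.pair a (Nat.pair y i)))
  | rfind {f} : RecursiveIn O f →
      RecursiveIn O fun a => Nat.rfind fun n => (fun m => m = 0) <$> f (Nat.pair a n)

/-- The characteristic function of `X ∈ 2^ω`, as a numeric oracle. -/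
def charFun (X : ℕ → Bool) : ℕ → ℕ := fun n => (X n).toNat

/-- Turing reducibility on Cantor space `2^ω`. -/
def TLE (A B : ℕ → Bool) : Prop :=
  RecursiveIn (charFun B) ↑(charFun A)

/-- Turing equivalence on Cantor space. -/
def TEquiv (A B : ℕ → Bool) : Prop := TLE A B ∧ TLE B A

/-- A set is computable iff it is Turing reducible to the empty set. -/
def ComputableSet (A : ℕ → Bool) : Prop := TLE A fun _ => false

/-- Turing join of two elements of Cantor space. -/
def join (A B : ℕ → Bool) : ℕ → Bool :=
  fun n => if n % 2 = 0 then A (n / 2) else B (n / 2)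

/-- `W ⊆ ℕ` is computably enumerable relative to `A`: it is the domain of a
partial function computable with oracle `A`. -/
def CEIn (A : ℕ → Bool) (W : Set ℕ) : Prop :=
  ∃ f : ℕ →. ℕ, RecursiveIn (charFun A) f ∧ ∀ n, (f n).Dom ↔ n ∈ W

/-- A set of finite binary strings is c.e. relative to `A` (via coding). -/
def CEStrings (A : ℕ → Bool) (W : Set (List Bool)) : Prop :=
  CEIn A (Encodable.encode '' W)

/-- The basic clopen cylinder of all extensions of a finite binary string. -/
def cyl (σ : List Bool) : Set (ℕ → Bool) :=
  {X | ∀ i < σ.length, X i = σ.getD i false}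

/-- The initial segment given by the first `k` bits of `X`. -/
def initSeg (X : ℕ → Bool) (k : ℕ) : List Bool := List.ofFn fun i : Fin k => X i

/-- `X` is 1-generic relative to `A`: for every set `W` of finite binary strings
c.e. in `A`, some initial segment of `X` is in `W` or has no extension in `W`. -/
def OneGenericIn (X A : ℕ → Bool) : Prop :=
  ∀ W : Set (List Bool), CEStrings A W →
    ∃ k, initSeg X k ∈ W ∨ ∀ τ ∈ W, ¬ initSeg X k <+: τ

/-- A sequence of open sets that is uniformly Σ⁰₁ relative to `A`. -/
def Sigma01Seq (A : ℕ → Bool) (U : ℕ → Set (ℕ → Bool)) : Prop :=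
  ∃ W : Set (ℕ × List Bool), CEIn A (Encodable.encode '' W) ∧
    ∀ n, U n = ⋃ σ ∈ {σ | (n, σ) ∈ W}, cyl σ

/-- A doubly indexed family of open sets that is uniformly Σ⁰₁ relative to `A`. -/
def Sigma01Fam (A : ℕ → Bool) (U : ℕ → ℕ → Set (ℕ → Bool)) : Prop :=
  ∃ W : Set (ℕ × ℕ × List Bool), CEIn A (Encodable.encode '' W) ∧
    ∀ e n, U e n = ⋃ σ ∈ {σ | (e, n, σ) ∈ W}, cyl σ

open Classical in
/-- The fair-coin (uniform) outer measure on Cantor space, obtained by the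
Carathéodory construction from the premeasure assigning `2 ^ (-|σ|)` to the
cylinder `cyl σ`. -/
noncomputable def mu : MeasureTheory.OuterMeasure (ℕ → Bool) :=
  MeasureTheory.OuterMeasure.ofFunction
    (fun s => if s = ∅ then 0 else
      ⨅ (σ : List Bool) (_ : s ⊆ cyl σ), (2 : ℝ≥0∞)⁻¹ ^ σ.length)
    (by simp)

/-- `X` is Martin-Löf random relative to `A`. -/
def MLRIn (X A : ℕ → Bool) : Prop :=
  ∀ U : ℕ → Set (ℕ → Bool), Sigma01Seq A U →
    (∀ n, mu (U n) ≤ (2 : ℝ≥0∞)⁻¹ ^ n) → X ∉ ⋂ n, U n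

/-- `X` is weakly 2-random relative to `A`: it avoids every null Π⁰₂(A) class. -/
def W2RIn (X A : ℕ → Bool) : Prop :=
  ∀ U : ℕ → Set (ℕ → Bool), Sigma01Seq A U →
    mu (⋂ n, U n) = 0 → X ∉ ⋂ n, U n

/-- Membership of a binary string in the tree coded by `T ∈ 2^ω`. -/
def inTree (T : ℕ → Bool) (σ : List Bool) : Prop := T (Encodable.encode σ) = true

/-- `T` codes an infinite binary tree: a prefix-closed, infinite set of strings. -/
def InfTree (T : ℕ → Bool) : Prop :=
  (∀ σ τ : List Bool, inTree T τ → σ <+: τ → inTree T σ) ∧ {σ | inTree T σ}.Infinite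

/-- `X` is an infinite path through the tree coded by `T`. -/
def IsPath (X T : ℕ → Bool) : Prop := ∀ k, inTree T (initSeg X k)

/-- A Scott set: nonempty, closed under Turing reducibility and join, and every
infinite binary tree coded in `S` has an infinite path in `S`. -/
structure IsScottSet (S : Set (ℕ → Bool)) : Prop where
  nonempty : S.Nonempty
  red : ∀ X ∈ S, ∀ Y, TLE Y X → Y ∈ S
  joined : ∀ X ∈ S, ∀ Y ∈ S, join X Y ∈ S
  paths : ∀ T ∈ S, InfTree T → ∃ X ∈ S, IsPath X T

/-- An ω-model of WWKL: nonempty, closed under Turing reducibility and join, and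
every Π⁰₁(A) class (for `A ∈ S`) of positive measure has an element in `S`. -/
structure IsWWKLModel (S : Set (ℕ → Bool)) : Prop where
  nonempty : S.Nonempty
  red : ∀ X ∈ S, ∀ Y, TLE Y X → Y ∈ S
  joined : ∀ X ∈ S, ∀ Y ∈ S, join X Y ∈ S
  wwkl : ∀ A ∈ S, ∀ W : Set (List Bool), CEStrings A W →
    mu (⋃ σ ∈ W, cyl σ)ᶜ ≠ 0 → ∃ X ∈ S, X ∈ (⋃ σ ∈ W, cyl σ)ᶜ

end KLS

/-!
If `X ≤_T A`, the strings incompatible with `X` form a set c.e. in `A`. No initial segment of `X`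
lies in it, yet each one has an extension in it (flip the next bit), contradicting genericity.

If `A ≤_T X` via a reduction `Φ`, let `W` be the set of strings `σ` along which `Φ^σ` converges to a
wrong value of `A`; `W` is c.e. in `A`. No initial segment of `X` lies in `W`, since `Φ^X = A`, so
by genericity some initial segment `σ` of `X` has no extension in `W`. Then `A(n)` is computed by
searching for any extension `τ` of `σ` with `Φ^τ(n)↓`: the value found cannot be wrong.

The finite-string computations `Φ^σ` come from the use principle, proved by induction on oracle
computations: `Φ^σ` is a code, primitive recursive in `σ`, answering oracle queries from the table
`σ`, and these codes approximate `Φ^X` monotonically and with finite use.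
-/

universe u

namespace Part

variable {α β γ : Type u}

theorem map_mono (g : α → β) {p q : Part α} (h : p ≤ q) : g <$> p ≤ g <$> q := by
  intro b hb
  obtain ⟨a, ha, rfl⟩ := (mem_map_iff g).1 hb
  exact (mem_map_iff g).2 ⟨a, h a ha, rfl⟩

theorem bind_mono {p q : Part α} {f g : α → Part β} (hpq : p ≤ q) (hfg : ∀ a, f a ≤ g a) :
    p >>= f ≤ q >>= g := by
  intro b hb
  obtain ⟨a, ha, hb⟩ := mem_bind_iff.1 hb
  exact mem_bind_iff.2 ⟨a, hpq a ha, hfg a b hb⟩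

theorem mem_map_seq_iff {f : α → β → γ} {p : Part α} {q : Part β} {c : γ} :
    c ∈ f <$> p <*> q ↔ ∃ a ∈ p, ∃ b ∈ q, f a b = c := by
  simp [Seq.seq]

theorem map_seq_mono (f : α → β → γ) {p p' : Part α} {q q' : Part β} (hp : p ≤ p') (hq : q ≤ q') :
    f <$> p <*> q ≤ f <$> p' <*> q' := by
  intro c hc
  obtain ⟨a, ha, b, hb, rfl⟩ := mem_map_seq_iff.1 hc
  exact mem_map_seq_iff.2 ⟨a, hp a ha, b, hq b hb, rfl⟩

theorem natRec_bind_mono {s₀ t₀ : Part α} {s t : ℕ → α → Part α} (h₀ : s₀ ≤ t₀)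
    (h : ∀ y i, s y i ≤ t y i) (n : ℕ) :
    (n.rec s₀ fun y IH => IH >>= s y : Part α) ≤ n.rec t₀ fun y IH => IH >>= t y := by
  induction n with
  | zero => exact h₀
  | succ n ih => exact bind_mono ih (h n)

end Part

theorem Nat.rfind_mono {p q : ℕ →. Bool} (h : ∀ n, p n ≤ q n) : Nat.rfind p ≤ Nat.rfind q := by
  intro a ha
  obtain ⟨h₁, h₂⟩ := Nat.mem_rfind.1 ha
  exact Nat.mem_rfind.2 ⟨h a _ h₁, fun hm => h _ _ (h₂ hm)⟩

namespace KLS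

open Nat.Partrec (Code)
open Nat.Partrec.Code

namespace RecursiveIn

variable {O : ℕ → ℕ}

theorem of_partrec {f : ℕ →. ℕ} (hf : Nat.Partrec f) : RecursiveIn O f := by
  induction hf with
  | zero => exact .zero
  | succ => exact .succ
  | left => exact .left
  | right => exact .right
  | pair _ _ hf hg => exact .pair hf hg
  | comp _ _ hf hg => exact .comp hf hg
  | prec _ _ hf hg => exact .prec hf hg
  | rfind _ hf => exact .rfind hf

theorem of_computable {f : ℕ → ℕ} (hf : Computable f) : RecursiveIn O f :=
  of_partrec (Partrec.nat_iff.1 hf.partrec)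

theorem trans {g : ℕ → ℕ} {f : ℕ →. ℕ} (hf : RecursiveIn g f) (hg : RecursiveIn O g) :
    RecursiveIn O f := by
  induction hf with
  | zero => exact .zero
  | succ => exact .succ
  | left => exact .left
  | right => exact .right
  | oracle => exact hg
  | pair _ _ hf hg => exact .pair hf hg
  | comp _ _ hf hg => exact .comp hf hg
  | prec _ _ hf hg => exact .prec hf hg
  | rfind _ hf => exact .rfind hf

theorem comp_total {g h : ℕ → ℕ} (hg : RecursiveIn O g) (hh : RecursiveIn O h) :
    RecursiveIn O ↑(fun n => g (h n)) := by
  have e : (fun n => (h : ℕ →. ℕ) n >>= (g : ℕ →. ℕ)) = ((fun n => g (h n) : ℕ → ℕ) : ℕ →. ℕ) :=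
    funext fun n => Part.bind_some _ _
  exact e ▸ hg.comp hh

theorem pair_total {g h : ℕ → ℕ} (hg : RecursiveIn O g) (hh : RecursiveIn O h) :
    RecursiveIn O ↑(fun n => Nat.pair (g n) (h n)) := by
  have e : (fun n => Nat.pair <$> (g : ℕ →. ℕ) n <*> (h : ℕ →. ℕ) n) =
      ((fun n => Nat.pair (g n) (h n) : ℕ → ℕ) : ℕ →. ℕ) := by
    funext n
    simp [PFun.coe_val, Seq.seq]
  exact e ▸ hg.pair hh

theorem of_computable_query {g : ℕ → ℕ → ℕ} {u : ℕ → ℕ} (hg : Computable₂ g) (hu : Computable u) :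
    RecursiveIn O ↑(fun x => g x (O (u x))) := by
  have hg' : Computable fun p : ℕ => g p.unpair.1 p.unpair.2 :=
    hg.comp (Computable.fst.comp Computable.unpair) (Computable.snd.comp Computable.unpair)
  simpa using (of_computable hg').comp_total
    ((of_computable Computable.id).pair_total (oracle.comp_total (of_computable hu)))

theorem exists_dom_iff_exists_eq_zero {D : ℕ → ℕ} (hD : RecursiveIn O D) :
    ∃ f : ℕ →. ℕ, RecursiveIn O f ∧ ∀ a, (f a).Dom ↔ ∃ n, D (Nat.pair a n) = 0 := by
  refine ⟨_, hD.rfind, fun a => Nat.rfind_dom.trans ?_⟩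
  simp [PFun.coe_val]

end RecursiveIn

theorem CEIn.of_tle {X A : ℕ → Bool} {W : Set ℕ} (hW : CEIn X W) (h : TLE X A) : CEIn A W :=
  let ⟨f, hf, hdom⟩ := hW
  ⟨f, hf.trans h, hdom⟩

theorem ceIn_of_exists_query {A : ℕ → Bool} {p : ℕ × ℕ → Bool → Bool} {u : ℕ × ℕ → ℕ}
    (hp : Computable₂ p) (hu : Computable u) :
    CEIn A {j | ∃ t, p (j, t) (A (u (j, t))) = true} := by
  have hD : Computable₂ fun x v : ℕ => bif p x.unpair (v == 1) then 0 else 1 :=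
    Computable.cond (hp.comp (Computable.unpair.comp Computable.fst)
        (Primrec.beq.comp Primrec.snd (Primrec.const 1)).to_comp)
      (Computable.const 0) (Computable.const 1)
  obtain ⟨f, hf, hdom⟩ := RecursiveIn.exists_dom_iff_exists_eq_zero
    (RecursiveIn.of_computable_query (O := charFun A) hD (hu.comp Computable.unpair))
  refine ⟨f, hf, fun j => (hdom j).trans ?_⟩
  have hA : ∀ i, ((A i).toNat == 1) = A i := fun i => by cases A i <;> rfl
  have hcond : ∀ b : Bool, (bif b then 0 else 1) = 0 ↔ b = true := by decide
  simp [charFun, hA, hcond]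

theorem ceIn_image_encode_of_exists_query {α β : Type*} [Primcodable α] [Primcodable β]
    {A : ℕ → Bool} {W : Set α} {p : α × β → Bool → Bool} {u : α × β → ℕ}
    (hp : Computable₂ p) (hu : Computable u)
    (hW : ∀ a, a ∈ W ↔ ∃ b, p (a, b) (A (u (a, b))) = true) :
    CEIn A (Encodable.encode '' W) := by
  set dec : ℕ × ℕ → Option (α × β) := fun jt =>
    (Encodable.decode₂ α jt.1).bind fun a => (Encodable.decode (α := β) jt.2).map (a, ·)
  have hdec : Computable dec :=
    Computable.option_bind (Primrec.decode₂.to_comp.comp Computable.fst)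
      (Computable.option_map (Computable.decode.comp (Computable.snd.comp Computable.fst))
        (Computable.pair (Computable.snd.comp Computable.fst) Computable.snd).to₂).to₂
  have hp' : Computable₂ fun jt v => (dec jt).elim false (p · v) := by
    have : Computable fun x : (ℕ × ℕ) × Bool => (dec x.1).elim false (p · x.2) :=
      (Computable.option_casesOn (hdec.comp Computable.fst) (Computable.const false)
        (hp.comp Computable.snd (Computable.snd.comp Computable.fst)).to₂).of_eq
          fun x => by cases dec x.1 <;> rfl
    exact this.to₂
  have hu' : Computable fun jt => (dec jt).elim 0 u :=
    (Computable.option_casesOn hdec (Computable.const 0) (hu.comp Computable.snd).to₂).of_eq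
      fun x => by cases dec x <;> rfl
  convert ceIn_of_exists_query (A := A) hp' hu' using 1
  ext j
  simp only [Set.mem_image, hW]
  constructor
  · rintro ⟨a, ⟨b, hb⟩, rfl⟩
    refine ⟨Encodable.encode b, ?_⟩
    simpa [dec, Encodable.encodek₂] using hb
  · rintro ⟨t, ht⟩
    rcases hd : dec (j, t) with - | ⟨a, b⟩
    · simp [hd] at ht
    · simp only [hd, Option.elim] at ht
      simp only [dec, Option.bind_eq_some_iff, Option.map_eq_some_iff, Prod.mk.injEq] at hd
      obtain ⟨a', ha', b', -, rfl, rfl⟩ := hd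
      exact ⟨a', ⟨b', ht⟩, Encodable.mem_decode₂.1 ha'⟩

structure IsApproxChain {α β : Type*} (c : ℕ → α →. β) (f : α →. β) : Prop where
  mono : ∀ ⦃k k' : ℕ⦄, k ≤ k' → ∀ x, c k x ≤ c k' x
  le : ∀ k x, c k x ≤ f x
  exists_mem : ∀ ⦃x b⦄, b ∈ f x → ∃ k, b ∈ c k x

namespace IsApproxChain

variable {α δ : Type*} {β γ : Type u}

theorem const (f : α →. β) : IsApproxChain (fun _ => f) f :=
  ⟨fun _ _ _ _ => le_rfl, fun _ _ => le_rfl, fun _ _ h => ⟨0, h⟩⟩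

variable {c : ℕ → α →. β} {f : α →. β}

theorem mem_of_le (hc : IsApproxChain c f) {k k' : ℕ} (h : k ≤ k') {x : α} {b : β}
    (hb : b ∈ c k x) : b ∈ c k' x :=
  hc.mono h x b hb

theorem exists_forall_lt (hc : IsApproxChain c f) {N : ℕ} {x : ℕ → α} {b : ℕ → β}
    (h : ∀ m < N, b m ∈ f (x m)) : ∃ k, ∀ m < N, b m ∈ c k (x m) := by
  induction N with
  | zero => exact ⟨0, fun m hm => absurd hm m.not_lt_zero⟩
  | succ N ih =>
    obtain ⟨k₁, hk₁⟩ := ih fun m hm => h m (hm.trans N.lt_succ_self)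
    obtain ⟨k₂, hk₂⟩ := hc.exists_mem (h N N.lt_succ_self)
    refine ⟨max k₁ k₂, fun m hm => ?_⟩
    rcases Nat.lt_succ_iff_lt_or_eq.1 hm with hm | rfl
    · exact hc.mem_of_le (le_max_left _ _) (hk₁ m hm)
    · exact hc.mem_of_le (le_max_right _ _) hk₂

theorem map (hc : IsApproxChain c f) (g : β → γ) :
    IsApproxChain (fun k x => g <$> c k x) (fun x => g <$> f x) where
  mono _ _ h x := Part.map_mono g (hc.mono h x)
  le k x := Part.map_mono g (hc.le k x)
  exists_mem x b hb := by
    obtain ⟨a, ha, rfl⟩ := (Part.mem_map_iff g).1 hb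
    obtain ⟨k, hk⟩ := hc.exists_mem ha
    exact ⟨k, (Part.mem_map_iff g).2 ⟨a, hk, rfl⟩⟩

theorem comp_right (hc : IsApproxChain c f) (u : δ → α) :
    IsApproxChain (fun k y => c k (u y)) (fun y => f (u y)) where
  mono _ _ h y := hc.mono h (u y)
  le k y := hc.le k (u y)
  exists_mem _ _ hb := hc.exists_mem hb

theorem pair {c d : ℕ → α →. ℕ} {f g : α →. ℕ} (hc : IsApproxChain c f)
    (hd : IsApproxChain d g) :
    IsApproxChain (fun k x => Nat.pair <$> c k x <*> d k x)
      (fun x => Nat.pair <$> f x <*> g x) where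
  mono _ _ h x := Part.map_seq_mono _ (hc.mono h x) (hd.mono h x)
  le k x := Part.map_seq_mono _ (hc.le k x) (hd.le k x)
  exists_mem x b hb := by
    obtain ⟨u, hu, v, hv, rfl⟩ := Part.mem_map_seq_iff.1 hb
    obtain ⟨k₁, hk₁⟩ := hc.exists_mem hu
    obtain ⟨k₂, hk₂⟩ := hd.exists_mem hv
    exact ⟨max k₁ k₂, Part.mem_map_seq_iff.2 ⟨u, hc.mem_of_le (le_max_left _ _) hk₁,
      v, hd.mem_of_le (le_max_right _ _) hk₂, rfl⟩⟩

theorem bind {c : ℕ → β →. γ} {d : ℕ → α →. β} {f : β →. γ} {g : α →. β}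
    (hc : IsApproxChain c f) (hd : IsApproxChain d g) :
    IsApproxChain (fun k x => d k x >>= c k) (fun x => g x >>= f) where
  mono _ _ h x := Part.bind_mono (hd.mono h x) (hc.mono h)
  le k x := Part.bind_mono (hd.le k x) (hc.le k)
  exists_mem x b hb := by
    obtain ⟨y, hy, hb⟩ := Part.mem_bind_iff.1 hb
    obtain ⟨k₁, hk₁⟩ := hd.exists_mem hy
    obtain ⟨k₂, hk₂⟩ := hc.exists_mem hb
    exact ⟨max k₁ k₂, Part.mem_bind_iff.2 ⟨y, hd.mem_of_le (le_max_left _ _) hk₁,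
      hc.mem_of_le (le_max_right _ _) hk₂⟩⟩

theorem prec {c d : ℕ → ℕ →. ℕ} {f g : ℕ →. ℕ} (hc : IsApproxChain c f)
    (hd : IsApproxChain d g) :
    IsApproxChain
      (fun k => Nat.unpaired fun a n =>
        n.rec (c k a) fun y IH => IH >>= fun i => d k (Nat.pair a (Nat.pair y i)))
      (Nat.unpaired fun a n =>
        n.rec (f a) fun y IH => IH >>= fun i => g (Nat.pair a (Nat.pair y i))) where
  mono _ _ h x := Part.natRec_bind_mono (hc.mono h _) (fun _ _ => hd.mono h _) _
  le k x := Part.natRec_bind_mono (hc.le k _) (fun _ _ => hd.le k _) _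
  exists_mem x b hb := by
    suffices ∀ (n : ℕ) (b : ℕ), b ∈ (n.rec (f x.unpair.1) fun y IH =>
          IH >>= fun i => g (Nat.pair x.unpair.1 (Nat.pair y i)) : Part ℕ) →
        ∃ k, b ∈ (n.rec (c k x.unpair.1) fun y IH =>
          IH >>= fun i => d k (Nat.pair x.unpair.1 (Nat.pair y i)) : Part ℕ) from this _ b hb
    intro n
    induction n with
    | zero => exact fun b hb => hc.exists_mem hb
    | succ n ih =>
      intro b hb
      obtain ⟨i, hi, hb⟩ := Part.mem_bind_iff.1 hb
      obtain ⟨k₁, hk₁⟩ := ih i hi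
      obtain ⟨k₂, hk₂⟩ := hd.exists_mem hb
      refine ⟨max k₁ k₂, Part.mem_bind_iff.2 ⟨i, ?_, hd.mem_of_le (le_max_right _ _) hk₂⟩⟩
      exact Part.natRec_bind_mono (hc.mono (le_max_left _ _) _)
        (fun _ _ => hd.mono (le_max_left _ _) _) n i hk₁

theorem rfind {c : ℕ → α × ℕ →. Bool} {p : α × ℕ →. Bool} (hc : IsApproxChain c p) :
    IsApproxChain (fun k a => Nat.rfind fun n => c k (a, n))
      (fun a => Nat.rfind fun n => p (a, n)) where
  mono _ _ h a := Nat.rfind_mono fun n => hc.mono h (a, n)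
  le k a := Nat.rfind_mono fun n => hc.le k (a, n)
  exists_mem a m hm := by
    obtain ⟨htrue, hfalse⟩ := Nat.mem_rfind.1 hm
    obtain ⟨k, hk⟩ := hc.exists_forall_lt (N := m + 1) (x := fun n => (a, n))
      (b := fun n => decide (n = m)) fun n hn => by
        rcases Nat.lt_succ_iff_lt_or_eq.1 hn with hn | rfl
        · simpa [hn.ne] using hfalse hn
        · simpa using htrue
    refine ⟨k, Nat.mem_rfind.2 ⟨by simpa using hk m m.lt_succ_self, fun hn => ?_⟩⟩
    simpa [hn.ne] using hk _ (hn.trans m.lt_succ_self)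

end IsApproxChain

def oracleSeg (O : ℕ → ℕ) (k : ℕ) : List ℕ := List.ofFn fun i : Fin k => O i

theorem oracleSeg_getElem? (O : ℕ → ℕ) (k n : ℕ) :
    (oracleSeg O k)[n]? = if n < k then some (O n) else none := by
  simp [oracleSeg, List.getElem?_ofFn]

theorem isApproxChain_oracleSeg (O : ℕ → ℕ) :
    IsApproxChain (fun k n => Part.ofOption (oracleSeg O k)[n]?) (O : ℕ →. ℕ) where
  mono k k' h n a ha := by
    simp only [Part.mem_ofOption, oracleSeg_getElem?] at ha ⊢
    split_ifs at ha with hn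
    · rwa [if_pos (hn.trans_le h)]
    · simp at ha
  le k n a ha := by
    simp only [Part.mem_ofOption, oracleSeg_getElem?] at ha
    split_ifs at ha
    · cases ha
      simp [PFun.coe_val]
    · simp at ha
  exists_mem n a ha := by
    simp only [PFun.coe_val, Part.mem_some_iff] at ha
    exact ⟨n + 1, by simp [oracleSeg_getElem?, ha]⟩

theorem exists_primrec_code_lookup :
    ∃ F : List ℕ → Code, Primrec F ∧ ∀ l n, eval (F l) n = Part.ofOption l[n]? := by
  have hlookup : Nat.Partrec fun p =>
      Part.ofOption (Denumerable.ofNat (List ℕ) p.unpair.1)[p.unpair.2]? :=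
    Partrec.nat_iff.1 (Computable.ofOption
      (Primrec.list_getElem?.comp ((Primrec.ofNat (List ℕ)).comp (Primrec.fst.comp Primrec.unpair))
        (Primrec.snd.comp Primrec.unpair)).to_comp)
  obtain ⟨c, hc⟩ := exists_code.1 hlookup
  exact ⟨fun l => c.curry (Encodable.encode l),
    primrec₂_curry.comp (Primrec.const c) Primrec.encode, fun l n => by simp [eval_curry, hc]⟩

theorem eval_rfind'_comp_pair_id_zero (c : Code) :
    eval ((c.rfind').comp (Code.pair Code.id Code.zero)) =
      fun a => Nat.rfind fun n => (fun m => decide (m = 0)) <$> eval c (Nat.pair a n) := by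
  simp only [eval, Seq.seq, eval_id, Part.map_eq_map, Part.map_some, pure, PFun.pure,
    Part.bind_some, Part.bind_eq_bind, Nat.unpaired, Nat.unpair_pair, add_zero]
  rfl

theorem RecursiveIn.exists_code_isApproxChain {O : ℕ → ℕ} {f : ℕ →. ℕ} (h : RecursiveIn O f) :
    ∃ F : List ℕ → Code, Primrec F ∧ IsApproxChain (fun k => eval (F (oracleSeg O k))) f := by
  induction h with
  | zero => exact ⟨fun _ => .zero, Primrec.const _, .const _⟩
  | succ => exact ⟨fun _ => .succ, Primrec.const _, .const _⟩
  | left => exact ⟨fun _ => .left, Primrec.const _, .const _⟩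
  | right => exact ⟨fun _ => .right, Primrec.const _, .const _⟩
  | oracle =>
    obtain ⟨F, hF, hev⟩ := exists_primrec_code_lookup
    refine ⟨F, hF, ?_⟩
    simpa only [← hev] using isApproxChain_oracleSeg O
  | pair _ _ ihf ihg =>
    obtain ⟨F, hF, hc⟩ := ihf
    obtain ⟨G, hG, hd⟩ := ihg
    exact ⟨fun l => (F l).pair (G l), primrec₂_pair.comp hF hG, hc.pair hd⟩
  | comp _ _ ihf ihg =>
    obtain ⟨F, hF, hc⟩ := ihf
    obtain ⟨G, hG, hd⟩ := ihg
    exact ⟨fun l => (F l).comp (G l), primrec₂_comp.comp hF hG, hc.bind hd⟩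
  | prec _ _ ihf ihg =>
    obtain ⟨F, hF, hc⟩ := ihf
    obtain ⟨G, hG, hd⟩ := ihg
    exact ⟨fun l => (F l).prec (G l), primrec₂_prec.comp hF hG, hc.prec hd⟩
  | rfind _ ihf =>
    obtain ⟨F, hF, hc⟩ := ihf
    refine ⟨fun l => ((F l).rfind').comp (Code.pair Code.id Code.zero),
      primrec₂_comp.comp (primrec_rfind'.comp hF) (Primrec.const _), ?_⟩
    simp only [eval_rfind'_comp_pair_id_zero]
    exact ((hc.map fun m => decide (m = 0)).comp_right fun x => Nat.pair x.1 x.2).rfind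

theorem length_initSeg (X : ℕ → Bool) (k : ℕ) : (initSeg X k).length = k := by
  simp [initSeg]

theorem getD_initSeg (X : ℕ → Bool) {i k : ℕ} (h : i < k) : (initSeg X k).getD i false = X i := by
  simp [initSeg, h]

theorem initSeg_prefix_initSeg (X : ℕ → Bool) {k k' : ℕ} (h : k ≤ k') :
    initSeg X k <+: initSeg X k' := by
  obtain ⟨d, rfl⟩ := Nat.exists_eq_add_of_le h
  exact ⟨List.ofFn fun j : Fin d => X (k + j), by simp [initSeg, List.ofFn_add]⟩

theorem map_toNat_initSeg (X : ℕ → Bool) (k : ℕ) :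
    (initSeg X k).map Bool.toNat = oracleSeg (charFun X) k := by
  simp only [initSeg, List.map_ofFn, oracleSeg, List.ofFn_inj]
  rfl

theorem mem_cyl_initSeg (X : ℕ → Bool) (k : ℕ) : X ∈ cyl (initSeg X k) := fun i hi =>
  (getD_initSeg X (by simpa [length_initSeg] using hi)).symm

theorem not_mem_cyl_initSeg_append_not (X : ℕ → Bool) (k : ℕ) :
    X ∉ cyl (initSeg X k ++ [!X k]) := fun hX => by
  have := hX k (by simp [length_initSeg])
  rw [List.getD_append_right _ _ _ _ (length_initSeg X k).le] at this
  simp [length_initSeg] at this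

theorem ceStrings_not_mem_cyl (X : ℕ → Bool) : CEStrings X {σ | X ∉ cyl σ} := by
  have hp : Primrec₂ fun (x : List Bool × ℕ) (b : Bool) =>
      decide (x.2 < x.1.length ∧ b ≠ x.1.getD x.2 false) :=
    (PrimrecPred.and (Primrec.nat_lt.comp (Primrec.snd.comp Primrec.fst)
        (Primrec.list_length.comp (Primrec.fst.comp Primrec.fst)))
      (Primrec.eq.comp Primrec.snd ((Primrec.list_getD false).comp
        (Primrec.fst.comp Primrec.fst) (Primrec.snd.comp Primrec.fst))).not).decide
  refine ceIn_image_encode_of_exists_query hp.to_comp Computable.snd fun σ => ?_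
  simp [cyl]

theorem not_tle_of_oneGenericIn {X A : ℕ → Bool} (hX : OneGenericIn X A) : ¬ TLE X A := by
  intro h
  obtain ⟨k, hk | hk⟩ := hX _ ((ceStrings_not_mem_cyl X).of_tle h)
  · exact hk (mem_cyl_initSeg X k)
  · exact hk _ (not_mem_cyl_initSeg_append_not X k) ⟨_, rfl⟩

def disagreeStrings (F : List ℕ → Code) (A : ℕ → Bool) : Set (List Bool) :=
  {σ | ∃ s n m, evaln s (F (σ.map Bool.toNat)) n = some m ∧ m ≠ (A n).toNat}

theorem ceStrings_disagreeStrings {F : List ℕ → Code} (hF : Primrec F) (A : ℕ → Bool) :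
    CEStrings A (disagreeStrings F A) := by
  have hcode : Primrec fun σ : List Bool => F (σ.map Bool.toNat) :=
    hF.comp (Primrec.list_map Primrec.id ((Primrec.dom_bool Bool.toNat).comp Primrec.snd))
  have hp : Primrec₂ fun (x : List Bool × ℕ × ℕ × ℕ) (b : Bool) =>
      decide (evaln x.2.1 (F (x.1.map Bool.toNat)) x.2.2.1 = some x.2.2.2 ∧ x.2.2.2 ≠ b.toNat) :=
    (PrimrecPred.and
      (Primrec.eq.comp (primrec_evaln.comp (((Primrec.fst.comp (Primrec.snd.comp Primrec.fst)).pair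
          (hcode.comp (Primrec.fst.comp Primrec.fst))).pair
          (Primrec.fst.comp (Primrec.snd.comp (Primrec.snd.comp Primrec.fst)))))
        (Primrec.option_some.comp
          (Primrec.snd.comp (Primrec.snd.comp (Primrec.snd.comp Primrec.fst)))))
      (Primrec.eq.comp (Primrec.snd.comp (Primrec.snd.comp (Primrec.snd.comp Primrec.fst)))
        ((Primrec.dom_bool Bool.toNat).comp Primrec.snd)).not).decide
  refine ceIn_image_encode_of_exists_query hp.to_comp
    (Primrec.fst.comp (Primrec.snd.comp Primrec.snd)).to_comp fun σ => ?_
  simp [disagreeStrings]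

theorem initSeg_not_mem_disagreeStrings {F : List ℕ → Code} {X A : ℕ → Bool}
    (hc : IsApproxChain (fun k => eval (F (oracleSeg (charFun X) k))) (charFun A : ℕ →. ℕ))
    (k : ℕ) : initSeg X k ∉ disagreeStrings F A := by
  rintro ⟨s, n, m, hm, hne⟩
  rw [map_toNat_initSeg] at hm
  exact hne (Part.mem_some_iff.1 (hc.le k n m (evaln_sound hm)))

theorem computable_of_forall_append_not_mem_disagreeStrings {F : List ℕ → Code} {X A : ℕ → Bool}
    (hF : Primrec F)
    (hc : IsApproxChain (fun k => eval (F (oracleSeg (charFun X) k))) (charFun A : ℕ →. ℕ))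
    {k : ℕ} (h : ∀ τ, initSeg X k ++ τ ∉ disagreeStrings F A) : Computable (charFun A) := by
  set g : ℕ → ℕ → Option ℕ := fun n t => (Encodable.decode (α := List Bool × ℕ) t).bind
    fun x => evaln x.2 (F ((initSeg X k ++ x.1).map Bool.toNat)) n
  have hg : Computable₂ g :=
    (Primrec.option_bind (Primrec.decode.comp Primrec.snd)
      (primrec_evaln.comp (((Primrec.snd.comp Primrec.snd).pair
        (hF.comp (Primrec.list_map
          (Primrec.list_append.comp (Primrec.const (initSeg X k)) (Primrec.fst.comp Primrec.snd))
          ((Primrec.dom_bool Bool.toNat).comp Primrec.snd).to₂))).pair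
        (Primrec.fst.comp Primrec.fst))).to₂).to_comp
  have hcorrect : ∀ n m, m ∈ Nat.rfindOpt (g n) → m = charFun A n := by
    intro n m hm
    obtain ⟨t, ht⟩ := Nat.rfindOpt_spec hm
    obtain ⟨⟨τ, s⟩, -, hs⟩ := Option.bind_eq_some_iff.1 ht
    by_contra hne
    exact h τ ⟨s, n, m, hs, hne⟩
  have hdom : ∀ n, (Nat.rfindOpt (g n)).Dom := by
    intro n
    obtain ⟨k₁, hk₁⟩ := hc.exists_mem (Part.mem_some (charFun A n))
    obtain ⟨τ, hτ⟩ := initSeg_prefix_initSeg X (le_max_right k₁ k)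
    have := hc.mem_of_le (le_max_left k₁ k) hk₁
    rw [← map_toNat_initSeg, ← hτ] at this
    obtain ⟨s, hs⟩ := evaln_complete.1 this
    exact Nat.rfindOpt_dom.2 ⟨Encodable.encode (τ, s), _, by simpa [g] using hs⟩
  exact (Partrec.rfindOpt hg).of_eq_tot fun n => by
    obtain ⟨m, hm⟩ := Part.dom_iff_mem.1 (hdom n)
    rwa [← hcorrect n m hm]

theorem computableSet_of_tle_of_oneGenericIn {X A : ℕ → Bool} (hX : OneGenericIn X A)
    (h : TLE A X) : ComputableSet A := by
  obtain ⟨F, hF, hc⟩ := RecursiveIn.exists_code_isApproxChain h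
  obtain ⟨k, hk | hk⟩ := hX _ (ceStrings_disagreeStrings hF A)
  · exact (initSeg_not_mem_disagreeStrings hc k hk).elim
  · exact RecursiveIn.of_computable
      (computable_of_forall_append_not_mem_disagreeStrings hF hc fun τ hτ => hk _ hτ ⟨τ, rfl⟩)

/-- If `A` is non-computable and `X` is 1-generic relative to
`A`, then `X` and `A` are Turing incomparable. -/
theorem oneGenericIn_incomparable (A X : ℕ → Bool) (hA : ¬ ComputableSet A)
    (hX : OneGenericIn X A) : ¬ TLE X A ∧ ¬ TLE A X :=
  ⟨not_tle_of_oneGenericIn hX, fun h => hA (computableSet_of_tle_of_oneGenericIn hX h)⟩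

end KLS
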